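/- arXiv:2105.10388 — 4 statements merged into one kernel-verified Lean document; each statement's English description precedes it below -/
import Mathlib

section
/- A set S = {s_1 < s_2 < ... < s_d} of positive integers is an admissible pinnacle set (i.e., S = Pin(π) for some permutation π of [n] for some n) if and only if s_i > 2i for all i in [d]. -/
/-!
Necessity: the pinnacles of value at most `s` sit at `k` pairwise non-adjacent positions; these,
their right neighbours and the left neighbour of the leftmost one are `2k + 1` distinct positions
carrying values at most `s`, so `2k < s`. Taking `s = s_i` (so `k = i`) gives `s_i > 2i`.

Sufficiency: let `n = s_d` and `a_0 < a_1 < ⋯` be the elements of `[n] \ S`. The word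
`a_0 s_1 a_1 s_2 ⋯ a_{d-1} s_d a_d a_{d+1} ⋯` ascends at every `a`, and `s_j` exceeds both
neighbours `a_{j-1} < a_j` because at least `s_j - j ≥ j + 1` non-pinnacle values lie below it.
So its pinnacle set is exactly `S`.
-/

/-- The pinnacle set of a permutation of `[n]` (values in `{1,...,n}`, where the
permutation is `i ↦ (π i).val + 1` in one-line notation). -/
def pinSet (n : ℕ) (π : Equiv.Perm (Fin n)) : Finset ℕ :=
  Finset.image (fun i => (π i).val + 1) <| Finset.univ.filter fun i : Fin n =>
    0 < i.val ∧ i.val + 1 < n ∧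
    (∀ j : Fin n, j.val + 1 = i.val → π j < π i) ∧
    (∀ j : Fin n, j.val = i.val + 1 → π j < π i)

open Finset

namespace Finset

variable (S : Finset ℕ) {i : ℕ}

theorem sort_getElem_eq_nth (h : i < (S.sort (· ≤ ·)).length) :
    (S.sort (· ≤ ·))[i] = Nat.nth (· ∈ S) i := by
  have hf : (Set.ofPred (· ∈ S)).Finite := S.finite_toSet
  have hS : hf.toFinset = S := by ext; simp
  rw [Nat.nth_eq_getD_sort hf, hS, List.getD_eq_getElem]

theorem nth_mem_of_lt_card (h : i < #S) : Nat.nth (· ∈ S) i ∈ S :=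
  Nat.nth_mem_of_lt_card S.finite_toSet (by simpa using h)

theorem exists_lt_card_nth_eq {t : ℕ} (ht : t ∈ S) : ∃ i < #S, Nat.nth (· ∈ S) i = t := by
  simpa using Nat.exists_lt_card_finite_nth_eq S.finite_toSet ht

theorem nth_lt_nth_of_lt_card {j : ℕ} (hij : i < j) (hj : j < #S) :
    Nat.nth (· ∈ S) i < Nat.nth (· ∈ S) j :=
  Nat.nth_lt_nth_of_lt_card S.finite_toSet hij (by simpa using hj)

theorem count_nth_of_lt_card (h : i < #S) : Nat.count (· ∈ S) (Nat.nth (· ∈ S) i) = i :=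
  Nat.count_nth_of_lt_card_finite S.finite_toSet (by simpa using h)

theorem image_nth_range_card : (range #S).image (Nat.nth (· ∈ S)) = S := by
  ext t
  simp only [mem_image, mem_range]
  exact ⟨fun ⟨i, hi, hit⟩ => hit ▸ S.nth_mem_of_lt_card hi, S.exists_lt_card_nth_eq⟩

theorem infinite_succ_notMem : (Set.ofPred fun v => v + 1 ∉ S).Infinite :=
  (S.finite_toSet.preimage (add_left_injective 1).injOn).infinite_compl

theorem count_succ_notMem_add_count (h0 : 0 ∉ S) (m : ℕ) :
    Nat.count (fun v => v + 1 ∉ S) m + Nat.count (· ∈ S) (m + 1) = m := by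
  rw [Nat.count_succ', if_neg h0, add_zero, add_comm, Nat.count_eq_card_filter_range,
    Nat.count_eq_card_filter_range, card_filter_add_card_filter_not, card_range]

theorem nth_succ_notMem_lt_of_count {m k : ℕ} (h0 : 0 ∉ S)
    (hk : k + Nat.count (· ∈ S) (m + 1) < m) : Nat.nth (fun v => v + 1 ∉ S) k < m := by
  have := S.count_succ_notMem_add_count h0 m
  exact Nat.nth_lt_of_lt_count (by omega)

end Finset

theorem two_mul_card_lt_card_union_image_pred_succ {P : Finset ℕ} (hP : P.Nonempty)
    (h0 : ∀ p ∈ P, 0 < p) (hsucc : ∀ p ∈ P, p + 1 ∉ P) :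
    2 * #P < #(P ∪ P.image (· - 1) ∪ P.image (· + 1)) := by
  set m := P.min' hP
  have hdisj : Disjoint P (P.image (· + 1)) := by
    simpa [disjoint_right] using hsucc
  have hm : m - 1 ∉ P ∪ P.image (· + 1) := by
    have := h0 m (P.min'_mem hP)
    simp only [mem_union, mem_image, not_or, not_exists, not_and]
    exact ⟨fun h => by have := P.min'_le _ h; omega,
      fun q hq _ => by have := P.min'_le _ hq; omega⟩
  calc 2 * #P < #(insert (m - 1) (P ∪ P.image (· + 1))) := by
        rw [card_insert_of_notMem hm, card_union_of_disjoint hdisj,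
          card_image_of_injective _ (add_left_injective 1)]
        omega
    _ ≤ _ := card_le_card <| insert_subset
        (mem_union_left _ (mem_union_right _ (mem_image_of_mem (· - 1) (P.min'_mem hP))))
        (union_subset (subset_union_left.trans subset_union_left) subset_union_right)

/-- Positions (counted from `0`) of the pinnacles of the word `w 0, …, w (n - 1)`. -/
def peaks (w : ℕ → ℕ) (n : ℕ) : Finset ℕ :=
  {p ∈ Ioo 0 (n - 1) | w (p - 1) < w p ∧ w (p + 1) < w p}

theorem mem_peaks {w : ℕ → ℕ} {n p : ℕ} :
    p ∈ peaks w n ↔ (0 < p ∧ p + 1 < n) ∧ w (p - 1) < w p ∧ w (p + 1) < w p := by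
  simp only [peaks, mem_filter, mem_Ioo]
  omega

theorem peaks_subset_range (w : ℕ → ℕ) (n : ℕ) : peaks w n ⊆ range n :=
  fun p hp => mem_range.2 (by have := (mem_peaks.1 hp).1; omega)

theorem pinSet_eq_image_peaks {n : ℕ} (π : Equiv.Perm (Fin n)) (w : ℕ → ℕ)
    (hw : ∀ p : Fin n, w p = π p) : pinSet n π = (peaks w n).image (w · + 1) := by
  have hw' : ∀ p (hp : p < n), w p = π ⟨p, hp⟩ := fun p hp => hw ⟨p, hp⟩
  ext t
  simp only [pinSet, mem_peaks, mem_image, mem_filter, mem_univ, true_and, Fin.lt_def]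
  constructor
  · rintro ⟨p, ⟨hp0, hpn, hl, hr⟩, rfl⟩
    refine ⟨p, ⟨⟨hp0, hpn⟩, ?_, ?_⟩, by rw [hw]⟩
    · rw [hw, hw' (p - 1) (by omega)]
      exact hl _ (by simp only; omega)
    · rw [hw, hw' (p + 1) hpn]
      exact hr _ rfl
  · rintro ⟨p, ⟨⟨hp0, hpn⟩, hl, hr⟩, rfl⟩
    refine ⟨⟨p, by omega⟩, ⟨hp0, hpn, fun j hj => ?_, fun j hj => ?_⟩, by rw [hw' p (by omega)]⟩
    · rwa [← hw, ← hw', show (j : ℕ) = p - 1 by simp only at hj; omega]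
    · rwa [← hw, ← hw', show (j : ℕ) = p + 1 from hj]

theorem exists_perm_eq {n : ℕ} (w : ℕ → ℕ) (hw : ∀ p < n, w p < n)
    (hinj : Set.InjOn w (range n)) : ∃ π : Equiv.Perm (Fin n), ∀ p : Fin n, w p = π p := by
  have hinj' : Function.Injective fun p : Fin n => (⟨w p, hw p p.2⟩ : Fin n) := fun p q h =>
    Fin.ext (hinj (by simp) (by simp) (congrArg Fin.val h))
  exact ⟨Equiv.ofBijective _ (Finite.injective_iff_bijective.1 hinj'), fun _ => rfl⟩

theorem two_mul_card_peaks_lt {w : ℕ → ℕ} {n s : ℕ} (hw : Set.InjOn w (range n))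
    (hP : {p ∈ peaks w n | w p < s}.Nonempty) : 2 * #{p ∈ peaks w n | w p < s} < s := by
  set P := {p ∈ peaks w n | w p < s}
  have hpeak : ∀ p ∈ P, (0 < p ∧ p + 1 < n) ∧ (w (p - 1) < w p ∧ w (p + 1) < w p) ∧ w p < s :=
    fun p hp => ⟨(mem_peaks.1 (mem_filter.1 hp).1).1, (mem_peaks.1 (mem_filter.1 hp).1).2,
      (mem_filter.1 hp).2⟩
  have hsub : P ∪ P.image (· - 1) ∪ P.image (· + 1) ⊆ {q ∈ range n | w q < s} := by
    intro q hq
    simp only [mem_union, mem_image, mem_filter, mem_range] at hq ⊢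
    rcases hq with (hp | ⟨p, hp, rfl⟩) | ⟨p, hp, rfl⟩ <;> obtain ⟨⟨_, _⟩, ⟨_, _⟩, _⟩ := hpeak _ hp
      <;> exact ⟨by omega, by omega⟩
  have hcount : #{q ∈ range n | w q < s} ≤ s := by
    simpa using card_le_card_of_injOn (t := range s) w
      (fun q hq => mem_range.2 (mem_filter.1 hq).2) (hw.mono (filter_subset _ _))
  calc 2 * #P < #(P ∪ P.image (· - 1) ∪ P.image (· + 1)) :=
        two_mul_card_lt_card_union_image_pred_succ hP (fun p hp => (hpeak p hp).1.1)
          (fun p hp hp' => by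
            have := (hpeak p hp).2.1.2
            have := (hpeak _ hp').2.1.1
            rw [Nat.add_sub_cancel] at this
            omega)
    _ ≤ #{q ∈ range n | w q < s} := card_le_card hsub
    _ ≤ s := hcount

theorem two_mul_succ_lt_nth_pinSet {n : ℕ} (π : Equiv.Perm (Fin n)) {i : ℕ}
    (hi : i < #(pinSet n π)) : 2 * (i + 1) < Nat.nth (· ∈ pinSet n π) i := by
  set S := pinSet n π
  set s := Nat.nth (· ∈ S) i
  let w : ℕ → ℕ := fun p => if h : p < n then π ⟨p, h⟩ else 0
  have hinj : Set.InjOn w (range n) := by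
    intro p hp q hq h
    simp only [coe_range, Set.mem_Iio] at hp hq
    simpa [w, hp, hq, Fin.val_inj] using h
  have hS : S = (peaks w n).image (w · + 1) := pinSet_eq_image_peaks π w (by simp [w])
  have hfilter : {t ∈ range (s + 1) | t ∈ S} = {p ∈ peaks w n | w p < s}.image (w · + 1) := by
    ext t
    rw [hS]
    simp only [mem_filter, mem_range, mem_image]
    constructor
    · rintro ⟨ht, p, hp, rfl⟩; exact ⟨p, ⟨hp, by omega⟩, rfl⟩
    · rintro ⟨p, ⟨hp, hps⟩, rfl⟩; exact ⟨by omega, p, hp, rfl⟩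
  have hcard : #{p ∈ peaks w n | w p < s} = i + 1 := by
    have hinj' : Set.InjOn (w · + 1) ({p ∈ peaks w n | w p < s} : Finset ℕ) :=
      (add_left_injective 1).comp_injOn
        (hinj.mono (coe_subset.2 ((filter_subset _ _).trans (peaks_subset_range w n))))
    rw [← card_image_of_injOn hinj', ← hfilter, ← Nat.count_eq_card_filter_range,
      Nat.count_succ, S.count_nth_of_lt_card hi, if_pos (S.nth_mem_of_lt_card hi)]
  have := two_mul_card_peaks_lt hinj (s := s) (card_pos.1 (by omega))
  omega

-- The word `a 0, b 0, a 1, b 1, …, a (d - 1), b (d - 1), a d, a (d + 1), …`.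
def interleave (a b : ℕ → ℕ) (d p : ℕ) : ℕ :=
  if 2 * d ≤ p then a (p - d) else if p % 2 = 0 then a (p / 2) else b (p / 2)

section interleave

variable {a b : ℕ → ℕ} {d : ℕ}

theorem interleave_two_mul {i : ℕ} (hi : i ≤ d) : interleave a b d (2 * i) = a i := by
  unfold interleave
  split_ifs <;> first | rfl | (congr 1; omega)

theorem interleave_two_mul_add_one {j : ℕ} (hj : j < d) :
    interleave a b d (2 * j + 1) = b j := by
  unfold interleave
  split_ifs <;> (congr 1; omega)

theorem interleave_injective (ha : Function.Injective a) (hb : Set.InjOn b (Set.Iio d))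
    (hab : ∀ i, ∀ j < d, a i ≠ b j) : Function.Injective (interleave a b d) := by
  intro p q h
  unfold interleave at h
  split_ifs at h <;> first
    | (have := ha h; omega)
    | (have := hb (Set.mem_Iio.2 (by omega)) (Set.mem_Iio.2 (by omega)) h; omega)
    | exact absurd h (hab _ _ (by omega))
    | exact absurd h.symm (hab _ _ (by omega))

theorem interleave_lt {n : ℕ} (ha : ∀ i < n - d, a i < n) (hb : ∀ j < d, b j < n)
    (hn : 2 * d ≤ n) {p : ℕ} (hp : p < n) : interleave a b d p < n := by
  unfold interleave
  split_ifs
  · exact ha _ (by omega)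
  · exact ha _ (by omega)
  · exact hb _ (by omega)

theorem interleave_lt_succ (ha : StrictMono a) (hab : ∀ j < d, a (j + 1) < b j) {p : ℕ}
    (hp : 2 * d ≤ p ∨ p % 2 = 0) : interleave a b d p < interleave a b d (p + 1) := by
  rcases hp with hp | hp
  · unfold interleave
    rw [if_pos hp, if_pos (by omega)]
    exact ha (by omega)
  · obtain ⟨i, rfl⟩ : ∃ i, p = 2 * i := ⟨p / 2, by omega⟩
    rcases Nat.lt_or_ge i d with hi | hi
    · rw [interleave_two_mul hi.le, interleave_two_mul_add_one hi]
      exact (ha (Nat.lt_succ_self i)).trans (hab i hi)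
    · unfold interleave
      rw [if_pos (by omega), if_pos (by omega)]
      exact ha (by omega)

theorem peaks_interleave {n : ℕ} (ha : StrictMono a) (hab : ∀ j < d, a (j + 1) < b j)
    (hn : 2 * d < n) : peaks (interleave a b d) n = (range d).image (2 * · + 1) := by
  ext p
  simp only [mem_peaks, mem_image, mem_range]
  constructor
  · rintro ⟨⟨hp0, hpn⟩, hl, hr⟩
    by_contra! hodd
    have := interleave_lt_succ ha hab (p := p) (by
      by_contra!
      exact hodd (p / 2) (by omega) (by omega))
    omega
  · rintro ⟨j, hj, rfl⟩
    have hl : interleave a b d (2 * j) = a j := interleave_two_mul hj.le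
    have hr : interleave a b d (2 * (j + 1)) = a (j + 1) := interleave_two_mul hj
    refine ⟨⟨by omega, by omega⟩, ?_, ?_⟩
    · rw [Nat.add_sub_cancel, hl, interleave_two_mul_add_one hj]
      exact (ha (Nat.lt_succ_self j)).trans (hab j hj)
    · rw [show 2 * j + 1 + 1 = 2 * (j + 1) by ring, hr, interleave_two_mul_add_one hj]
      exact hab j hj

theorem exists_pinSet_interleave_eq {n : ℕ} (ha : StrictMono a) (hb : StrictMonoOn b (Set.Iio d))
    (hab : ∀ i, ∀ j < d, a i ≠ b j) (hab_lt : ∀ j < d, a (j + 1) < b j)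
    (ha_lt : ∀ i < n - d, a i < n) (hb_lt : ∀ j < d, b j < n) (hn : 2 * d < n) :
    ∃ π : Equiv.Perm (Fin n), pinSet n π = (range d).image (b · + 1) := by
  obtain ⟨π, hπ⟩ := exists_perm_eq (interleave a b d) (fun p => interleave_lt ha_lt hb_lt hn.le)
    (interleave_injective ha.injective hb.injOn hab).injOn
  refine ⟨π, ?_⟩
  rw [pinSet_eq_image_peaks π _ hπ, peaks_interleave ha hab_lt hn, image_image]
  exact image_congr fun j hj => by
    simp only [Function.comp_apply, interleave_two_mul_add_one (mem_range.1 hj)]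

end interleave

theorem exists_pinSet_eq {S : Finset ℕ} (hS : ∀ i < #S, 2 * (i + 1) < Nat.nth (· ∈ S) i) :
    ∃ (n : ℕ) (π : Equiv.Perm (Fin n)), pinSet n π = S := by
  obtain rfl | hne := S.eq_empty_or_nonempty
  · exact ⟨0, 1, rfl⟩
  have h0 : 0 ∉ S := fun h => by
    obtain ⟨i, hi, hsi⟩ := S.exists_lt_card_nth_eq h
    have := hS i hi
    omega
  set d := #S
  set s := Nat.nth (· ∈ S)
  set b := fun j => s j - 1
  set n := s (d - 1)
  have hd : 0 < d := card_pos.2 hne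
  have hbs : ∀ j < d, b j + 1 = s j := fun j hj => by
    have := hS j hj
    exact Nat.sub_add_cancel (by omega)
  have hb : StrictMonoOn b (Set.Iio d) := fun i hi j hj hij => by
    have : s i < s j := S.nth_lt_nth_of_lt_card hij hj
    have := hbs i hi
    have := hbs j hj
    omega
  have hcount_n : Nat.count (· ∈ S) (n + 1) = d := by
    rw [Nat.count_succ, S.count_nth_of_lt_card (by omega),
      if_pos (S.nth_mem_of_lt_card (by omega))]
    omega
  obtain ⟨π, hπ⟩ := exists_pinSet_interleave_eq (n := n)
    (Nat.nth_strictMono S.infinite_succ_notMem) hb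
    (fun i j hj h => Nat.nth_mem_of_infinite S.infinite_succ_notMem i
      (h ▸ hbs j hj ▸ S.nth_mem_of_lt_card hj))
    (fun j hj => S.nth_succ_notMem_lt_of_count h0 (by
      have := hS j hj
      have := hbs j hj
      rw [this, S.count_nth_of_lt_card hj]
      omega))
    (fun i hi => S.nth_succ_notMem_lt_of_count h0 (by omega))
    (fun j hj => by
      have := (hb.le_iff_le hj (Set.mem_Iio.2 (by omega))).2 (Nat.le_sub_one_of_lt hj)
      have := hbs (d - 1) (by omega)
      omega)
    (by have := hS (d - 1) (by omega); rwa [Nat.sub_add_cancel hd] at this)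
  refine ⟨n, π, hπ.trans ?_⟩
  rw [← S.image_nth_range_card]
  exact image_congr fun j hj => hbs j (mem_range.1 hj)

/-- A set `S = {s_1 < ⋯ < s_d}` is an admissible pinnacle set iff `s_i > 2i` for all `i`. -/
theorem stmt0 (S : Finset ℕ) :
    (∃ (n : ℕ) (π : Equiv.Perm (Fin n)), pinSet n π = S) ↔
      ∀ i (h : i < (S.sort (· ≤ ·)).length), 2 * (i + 1) < (S.sort (· ≤ ·)).get ⟨i, h⟩ := by
  simp only [List.get_eq_getElem, S.sort_getElem_eq_nth, Finset.length_sort]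
  refine ⟨?_, exists_pinSet_eq⟩
  rintro ⟨n, π, rfl⟩ i hi
  exact two_mul_succ_lt_nth_pinSet π hi
end

section
/- For positive integers m, d with m > 2d, the number of admissible pinnacle sets with maximum m and cardinality d equals ((m−2d+1)/(m−1))·C(m−1, d−1). -/
/-!
Admissibility of `S` says exactly that `2 · #{t ∈ S | t ≤ s} < s` for every `s ∈ S`, so adding a
new maximum `m` to an admissible set `T` keeps it admissible iff `2 (#T + 1) < m`. Hence the sets
counted are the sets `insert m T` with `T` an admissible `(d - 1)`-subset of `[0, m - 1]`. Splitting
by whether `n + 1` belongs to the set, the number `a n k` of admissible `k`-subsets of `[0, n]`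
satisfies Pascal's rule `a (n + 1) (k + 1) = a n (k + 1) + a n k` while `2 (k + 1) < n + 1`, and
vanishes beyond that range; induction on `n` then gives the ballot-type formula
`n · a n k = (n - 2k) · C(n, k)`.
-/

/-- `S = {s_1 < ⋯ < s_d}` is an admissible pinnacle set: `s_i > 2i` for all `i ∈ [d]`. -/
def Admissible (S : Finset ℕ) : Prop :=
  ∀ i (h : i < (S.sort (· ≤ ·)).length), 2 * (i + 1) < (S.sort (· ≤ ·)).get ⟨i, h⟩

open Finset

instance : DecidablePred Admissible := fun S => by unfold Admissible; infer_instance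

theorem card_filter_le_orderEmbOfFin {α : Type*} [LinearOrder α] (S : Finset α) {k : ℕ}
    (h : #S = k) (i : Fin k) :
    #{t ∈ S | t ≤ S.orderEmbOfFin h i} = i + 1 := by
  set f := S.orderEmbOfFin h
  have hS : S = univ.map f.toEmbedding := (S.map_orderEmbOfFin_univ h).symm
  rw [hS, filter_map, card_map]
  simp [f, filter_ge_eq_Iic]

theorem admissible_iff_forall_card_filter_le {S : Finset ℕ} :
    Admissible S ↔ ∀ s ∈ S, 2 * #{t ∈ S | t ≤ s} < s := by
  have hsorted : Admissible S ↔ ∀ i : Fin #S, 2 * (i + 1 : ℕ) < S.orderEmbOfFin rfl i := by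
    simp [Admissible, orderEmbOfFin_apply, Fin.forall_iff]
  simp_rw [hsorted, ← mem_coe, ← S.range_orderEmbOfFin rfl, Set.forall_mem_range,
    card_filter_le_orderEmbOfFin]

theorem admissible_insert_iff {T : Finset ℕ} {m : ℕ} (hT : ∀ t ∈ T, t < m) :
    Admissible (insert m T) ↔ Admissible T ∧ 2 * (#T + 1) < m := by
  have hm : m ∉ T := fun h => (hT m h).false
  have hfilter_max : {t ∈ insert m T | t ≤ m} = insert m T :=
    filter_true_of_mem fun t ht => (mem_insert.mp ht).elim le_of_eq fun h => (hT t h).le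
  have hfilter_lt : ∀ s ∈ T, {t ∈ insert m T | t ≤ s} = {t ∈ T | t ≤ s} := fun s hs => by
    rw [filter_insert, if_neg (hT s hs).not_ge]
  simp_rw [admissible_iff_forall_card_filter_le, forall_mem_insert, hfilter_max,
    card_insert_of_notMem hm, and_comm (a := _ < m)]
  exact and_congr_left' (forall₂_congr fun s hs => by rw [hfilter_lt s hs])

theorem Admissible.two_mul_card_lt_max' {S : Finset ℕ} (hS : Admissible S) (hne : S.Nonempty) :
    2 * #S < S.max' hne := by
  have h := admissible_iff_forall_card_filter_le.mp hS _ (S.max'_mem hne)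
  rwa [filter_true_of_mem fun t ht => S.le_max' t ht] at h

def admissibleSets (n k : ℕ) : Finset (Finset ℕ) := {S ∈ (Iic n).powersetCard k | Admissible S}

theorem mem_admissibleSets {n k : ℕ} {S : Finset ℕ} :
    S ∈ admissibleSets n k ↔ (∀ s ∈ S, s ≤ n) ∧ #S = k ∧ Admissible S := by
  simp [admissibleSets, mem_powersetCard, subset_iff, and_assoc]

theorem admissibleSets_zero_right (n : ℕ) : admissibleSets n 0 = {∅} := by
  ext S
  simp only [mem_admissibleSets, card_eq_zero, mem_singleton]
  exact ⟨fun h => h.2.1, by rintro rfl; simp [admissible_iff_forall_card_filter_le]⟩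

theorem admissibleSets_eq_empty {n k : ℕ} (hk : 0 < k) (hn : n ≤ 2 * k) :
    admissibleSets n k = ∅ := by
  refine eq_empty_of_forall_notMem fun S hS => ?_
  obtain ⟨hle, hcard, hA⟩ := mem_admissibleSets.mp hS
  have hne : S.Nonempty := card_pos.mp (hcard ▸ hk)
  have := hA.two_mul_card_lt_max' hne
  have := hle _ (S.max'_mem hne)
  omega

theorem filter_notMem_admissibleSets (n k : ℕ) :
    {S ∈ admissibleSets (n + 1) k | n + 1 ∉ S} = admissibleSets n k := by
  ext S
  simp only [mem_filter, mem_admissibleSets]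
  constructor
  · rintro ⟨⟨hle, hcard, hA⟩, hn⟩
    exact ⟨fun s hs => Nat.le_of_lt_succ ((hle s hs).lt_of_ne fun h => hn (h ▸ hs)), hcard, hA⟩
  · rintro ⟨hle, hcard, hA⟩
    exact ⟨⟨fun s hs => (hle s hs).trans n.le_succ, hcard, hA⟩, fun h => by have := hle _ h; omega⟩

theorem card_filter_mem_admissibleSets {n k : ℕ} (h : 2 * (k + 1) < n + 1) :
    #{S ∈ admissibleSets (n + 1) (k + 1) | n + 1 ∈ S} = #(admissibleSets n k) := by
  have hnotMem {T : Finset ℕ} (hT : T ∈ admissibleSets n k) : n + 1 ∉ T := fun h' => by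
    have := (mem_admissibleSets.mp hT).1 _ h'
    omega
  refine card_nbij' (erase · (n + 1)) (insert (n + 1)) (fun S hS => ?_) (fun T hT => ?_)
    (fun S hS => insert_erase (mem_filter.mp hS).2) (fun T hT => erase_insert (hnotMem hT))
  · obtain ⟨hS, hn⟩ := mem_filter.mp hS
    obtain ⟨hle, hcard, hA⟩ := mem_admissibleSets.mp hS
    have hlt : ∀ t ∈ S.erase (n + 1), t < n + 1 := fun t ht =>
      (hle t (mem_of_mem_erase ht)).lt_of_ne (ne_of_mem_erase ht)
    rw [← insert_erase hn, admissible_insert_iff hlt] at hA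
    exact mem_admissibleSets.mpr ⟨fun t ht => Nat.le_of_lt_succ (hlt t ht),
      by rw [card_erase_of_mem hn, hcard]; rfl, hA.1⟩
  · obtain ⟨hle, hcard, hA⟩ := mem_admissibleSets.mp hT
    have hlt : ∀ t ∈ T, t < n + 1 := fun t ht => Nat.lt_succ_of_le (hle t ht)
    refine mem_filter.mpr ⟨mem_admissibleSets.mpr ⟨?_, ?_, ?_⟩, mem_insert_self _ _⟩
    · exact forall_mem_insert _ _ _ |>.mpr ⟨le_rfl, fun t ht => (hlt t ht).le⟩
    · rw [card_insert_of_notMem (hnotMem hT), hcard]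
    · exact (admissible_insert_iff hlt).mpr ⟨hA, hcard ▸ h⟩

theorem card_admissibleSets_succ_succ {n k : ℕ} (h : 2 * (k + 1) < n + 1) :
    #(admissibleSets (n + 1) (k + 1)) = #(admissibleSets n (k + 1)) + #(admissibleSets n k) := by
  rw [← card_filter_add_card_filter_not (n + 1 ∈ ·), filter_notMem_admissibleSets,
    card_filter_mem_admissibleSets h, add_comm]

-- `n - 2 * k` truncates to `0` exactly where `admissibleSets n k` is empty (for `k > 0`).
theorem mul_card_admissibleSets (n k : ℕ) :
    n * #(admissibleSets n k) = (n - 2 * k) * n.choose k := by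
  induction n generalizing k with
  | zero => simp
  | succ n ih =>
    rcases k with _ | k
    · simp [admissibleSets_zero_right]
    rcases le_or_gt (n + 1) (2 * (k + 1)) with hle | hlt
    · simp [admissibleSets_eq_empty k.succ_pos hle, Nat.sub_eq_zero_of_le hle]
    have hn : 0 < n := by omega
    have ha := ih (k + 1)
    have hb := ih k
    have hC := Nat.choose_succ_right_eq n k
    rw [card_admissibleSets_succ_succ hlt, Nat.choose_succ_succ]
    apply Nat.eq_of_mul_eq_mul_left hn
    zify [(by omega : 2 * (k + 1) ≤ n), (by omega : 2 * k ≤ n), (by omega : k ≤ n), hlt.le]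
      at ha hb hC ⊢
    linear_combination ((n : ℤ) + 1) * ha + ((n : ℤ) + 1) * hb - 2 * hC

/-- For `m > 2d ≥ 2`, the number of admissible pinnacle sets with maximum `m` and
cardinality `d` equals `((m−2d+1)/(m−1))·C(m−1, d−1)`. -/
theorem stmt9 (m d : ℕ) (hd : 0 < d) (h : 2 * d < m) :
    (Nat.card {S : Finset ℕ //
        Admissible S ∧ S.card = d ∧ m ∈ S ∧ ∀ s ∈ S, s ≤ m} : ℚ) =
      ((m : ℚ) - 2 * d + 1) / ((m : ℚ) - 1) * Nat.choose (m - 1) (d - 1) := by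
  obtain ⟨k, rfl⟩ := Nat.exists_eq_add_one_of_ne_zero hd.ne'
  obtain ⟨n, rfl⟩ := Nat.exists_eq_add_one_of_ne_zero (by omega : m ≠ 0)
  have hcard : Nat.card {S : Finset ℕ // Admissible S ∧ S.card = k + 1 ∧ n + 1 ∈ S ∧
      ∀ s ∈ S, s ≤ n + 1} = #(admissibleSets n k) := by
    rw [← card_filter_mem_admissibleSets h, ← Nat.card_eq_finsetCard]
    exact Nat.card_congr (Equiv.subtypeEquivRight fun S => by
      rw [mem_filter, mem_admissibleSets]; tauto)
  have hmul := congrArg (Nat.cast : ℕ → ℚ) (mul_card_admissibleSets n k)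
  push_cast [Nat.cast_sub (by omega : 2 * k ≤ n)] at hmul
  have hn : (n : ℚ) ≠ 0 := by exact_mod_cast (by omega : n ≠ 0)
  rw [hcard, Nat.add_sub_cancel, Nat.add_sub_cancel]
  push_cast
  rw [add_sub_cancel_right, eq_comm, div_mul_eq_mul_div, div_eq_iff hn]
  linear_combination -hmul
end

section
/- For 3 ≤ l ≤ n, the number of permutations of [n] with pinnacle set exactly {l} equals 2^{n−2}·(2^{l−2} − 1). -/
open Finset
open scoped Nat

namespace List

variable {α : Type*} [LinearOrder α]

def peaks : List α → List α
  | a :: b :: c :: t => if a < b ∧ c < b then b :: peaks (b :: c :: t) else peaks (b :: c :: t)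
  | _ => []

@[simp] theorem peaks_nil : ([] : List α).peaks = [] := rfl

@[simp] theorem peaks_singleton (a : α) : [a].peaks = [] := rfl

@[simp] theorem peaks_pair (a b : α) : [a, b].peaks = [] := rfl

theorem peaks_cons_cons_cons (a b c : α) (t : List α) :
    peaks (a :: b :: c :: t) =
      if a < b ∧ c < b then b :: peaks (b :: c :: t) else peaks (b :: c :: t) := rfl

theorem peaks_cons_sublist : ∀ (a : α) (L : List α), peaks (a :: L) <+ L
  | _, [] | _, [_] => nil_sublist _
  | a, b :: c :: t => by
    have ih := peaks_cons_sublist b (c :: t)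
    rw [peaks_cons_cons_cons]
    split_ifs
    · exact ih.cons_cons b
    · exact ih.cons b

theorem peaks_sublist : ∀ L : List α, L.peaks <+ L
  | [] => nil_sublist _
  | a :: L => (peaks_cons_sublist a L).cons a

theorem notMem_peaks_of_forall_lt {a : α} {L : List α} (h : ∀ x ∈ L, x < a) :
    a ∉ L.peaks := fun ha => (h a ((peaks_sublist L).subset ha)).false

theorem peaks_cons_of_forall_lt {m : α} : ∀ {L : List α}, (∀ x ∈ L, x < m) →
    peaks (m :: L) = peaks L
  | [], _ | [_], _ => rfl
  | b :: c :: t, h => by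
    rw [peaks_cons_cons_cons, if_neg fun hb => (h b (by simp)).not_gt hb.1]

theorem peaks_append_cons_of_forall_lt {m : α} : ∀ {LA LB : List α},
    (∀ x ∈ LA, x < m) → (∀ x ∈ LB, x < m) →
    peaks (LA ++ m :: LB) = peaks LA ++ (if LA ≠ [] ∧ LB ≠ [] then [m] else []) ++ peaks LB
  | [], _, _, hB => by simp [peaks_cons_of_forall_lt hB]
  | [_], [], _, _ => rfl
  | [a], b :: t, hA, hB => by
    rw [singleton_append, peaks_cons_cons_cons, if_pos ⟨hA a (by simp), hB b (by simp)⟩,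
      peaks_cons_of_forall_lt hB]
    simp
  | a :: b :: t, LB, hA, hB => by
    have ih := peaks_append_cons_of_forall_lt (LA := b :: t) (fun x hx => hA x (by simp [hx])) hB
    cases t with
    | nil =>
      have hbm : ¬ m < b := (hA b (by simp)).not_gt
      simp_all [peaks_cons_cons_cons]
    | cons c t =>
      simp only [cons_append, peaks_cons_cons_cons] at ih ⊢
      rw [ih]
      split_ifs <;> simp_all

theorem mem_peaks_iff {x : α} : ∀ {L : List α}, x ∈ L.peaks ↔
    ∃ (i : ℕ) (h : i + 2 < L.length), L[i] < L[i + 1] ∧ L[i + 2] < L[i + 1] ∧ L[i + 1] = x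
  | [] | [_] | [_, _] => by simp
  | a :: b :: c :: t => by
    rw [← Nat.or_exists_add_one, peaks_cons_cons_cons]
    have ih := mem_peaks_iff (x := x) (L := b :: c :: t)
    split_ifs with h <;> simp_all [eq_comm]

end List

section Arrangements

variable {α : Type*} [DecidableEq α]

noncomputable def arrangements (s : Finset α) : Finset (List α) :=
  s.toList.permutations.toFinset

theorem mem_arrangements {s : Finset α} {L : List α} :
    L ∈ arrangements s ↔ L.Nodup ∧ L.toFinset = s := by
  rw [arrangements, List.mem_toFinset, List.mem_permutations]
  refine ⟨fun h => ⟨h.nodup_iff.mpr s.nodup_toList, ?_⟩, fun ⟨hL, hs⟩ => ?_⟩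
  · rw [List.toFinset_eq_of_perm _ _ h, toList_toFinset]
  · exact List.perm_of_nodup_nodup_toFinset_eq hL s.nodup_toList (by rw [hs, toList_toFinset])

theorem card_arrangements (s : Finset α) : #(arrangements s) = (#s)! := by
  rw [arrangements, List.toFinset_card_of_nodup (List.nodup_permutations _ s.nodup_toList),
    List.length_permutations, length_toList]

theorem arrangements_empty : arrangements (∅ : Finset α) = {[]} := by
  ext L
  simp +contextual [mem_arrangements]

theorem List.Nodup.toFinset_eq_singleton_iff {L : List α} (hL : L.Nodup) {a : α} :
    L.toFinset = {a} ↔ L = [a] := by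
  refine ⟨fun hs => ?_, fun h => by simp [h]⟩
  obtain ⟨b, rfl⟩ := List.length_eq_one_iff.mp
    (by rw [← List.toFinset_card_of_nodup hL, hs, card_singleton])
  simpa using hs

theorem arrangements_singleton (a : α) : arrangements {a} = {[a]} := by
  ext L
  rw [mem_arrangements, Finset.mem_singleton]
  exact ⟨fun ⟨hL, hs⟩ => hL.toFinset_eq_singleton_iff.mp hs, by rintro rfl; simp⟩

theorem append_cons_mem_arrangements_insert {m : α} {s A : Finset α} {LA LB : List α}
    (hm : m ∉ s) (hA : A ⊆ s) (hLA : LA ∈ arrangements A) (hLB : LB ∈ arrangements (s \ A)) :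
    LA ++ m :: LB ∈ arrangements (insert m s) := by
  obtain ⟨ndLA, rfl⟩ := mem_arrangements.mp hLA
  obtain ⟨ndLB, hB⟩ := mem_arrangements.mp hLB
  have memLA : ∀ x ∈ LA, x ∈ s := fun x hx => hA (List.mem_toFinset.mpr hx)
  have memLB : ∀ x, x ∈ LB ↔ x ∈ s ∧ x ∉ LA := fun x => by
    rw [← List.mem_toFinset, hB, mem_sdiff, List.mem_toFinset]
  refine mem_arrangements.mpr ⟨?_, ?_⟩
  · simp only [List.nodup_append, List.nodup_cons, List.mem_cons]
    refine ⟨ndLA, ⟨fun h => hm ((memLB m).mp h).1, ndLB⟩, ?_⟩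
    rintro x hx y (rfl | hy) rfl
    exacts [hm (memLA x hx), ((memLB x).mp hy).2 hx]
  · ext x
    simp only [List.mem_toFinset, List.mem_append, List.mem_cons, mem_insert, memLB]
    grind

theorem exists_append_cons_of_mem_arrangements_insert {m : α} {s : Finset α} {L : List α}
    (hm : m ∉ s) (hL : L ∈ arrangements (insert m s)) :
    ∃ LA LB, L = LA ++ m :: LB ∧ LA.toFinset ⊆ s ∧ LA ∈ arrangements LA.toFinset ∧
      LB ∈ arrangements (s \ LA.toFinset) := by
  obtain ⟨hL, hs⟩ := mem_arrangements.mp hL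
  obtain ⟨LA, LB, rfl⟩ := List.append_of_mem (List.mem_toFinset.mp (hs ▸ mem_insert_self m s))
  have mem : ∀ x, x = m ∨ x ∈ LA ∨ x ∈ LB ↔ x = m ∨ x ∈ s := fun x => by
    simpa using congrArg (x ∈ ·) hs
  simp only [List.nodup_append, List.nodup_cons, List.mem_cons] at hL
  obtain ⟨hLA, ⟨hmLB, hLB⟩, hdisj⟩ := hL
  refine ⟨LA, LB, rfl, fun x hx => ?_, mem_arrangements.mpr ⟨hLA, rfl⟩,
    mem_arrangements.mpr ⟨hLB, ?_⟩⟩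
  · have hxm : x ≠ m := hdisj x (List.mem_toFinset.mp hx) m (Or.inl rfl)
    simpa [hxm] using (mem x).mp (Or.inr (Or.inl (List.mem_toFinset.mp hx)))
  · ext x
    simp only [List.mem_toFinset, mem_sdiff]
    grind

theorem card_filter_arrangements_insert {m : α} {s : Finset α} (hm : m ∉ s)
    (P : List α → Prop) [DecidablePred P] :
    #{L ∈ arrangements (insert m s) | P L} =
      ∑ A ∈ s.powerset, #{p ∈ arrangements A ×ˢ arrangements (s \ A) | P (p.1 ++ m :: p.2)} := by
  rw [← card_sigma, eq_comm]
  refine card_bij (fun q _ => q.2.1 ++ m :: q.2.2) ?_ ?_ ?_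
  · rintro ⟨A, LA, LB⟩ hq
    simp only [mem_sigma, mem_powerset, mem_filter, mem_product] at hq
    exact mem_filter.mpr
      ⟨append_cons_mem_arrangements_insert hm hq.1 hq.2.1.1 hq.2.1.2, hq.2.2⟩
  · rintro ⟨A, LA, LB⟩ hq ⟨A', LA', LB'⟩ hq' h
    simp only [mem_sigma, mem_powerset, mem_filter, mem_product, mem_arrangements] at hq hq'
    obtain ⟨hA, ⟨⟨-, rfl⟩, -, hB⟩, -⟩ := hq
    obtain ⟨-, ⟨⟨-, rfl⟩, -⟩, -⟩ := hq'
    have hmLA : m ∉ LA := fun h => hm (hA (List.mem_toFinset.mpr h))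
    have hmLB : m ∉ LB := fun h => hm (mem_sdiff.mp (hB ▸ List.mem_toFinset.mpr h)).1
    obtain ⟨rfl, -, rfl⟩ := (List.append_cons_inj_of_notMem hmLA hmLB).mp h
    rfl
  · intro L hL
    obtain ⟨hL, hP⟩ := mem_filter.mp hL
    obtain ⟨LA, LB, rfl, hA, hLA, hLB⟩ := exists_append_cons_of_mem_arrangements_insert hm hL
    exact ⟨⟨LA.toFinset, LA, LB⟩, by simp [hA, hLA, hLB, hP], rfl⟩

end Arrangements

section Counting

variable {α : Type*} [LinearOrder α]

theorem eq_nil_iff_of_mem_arrangements {s : Finset α} {L : List α} (hL : L ∈ arrangements s) :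
    L = [] ↔ s = ∅ := by
  rw [← (mem_arrangements.mp hL).2, List.toFinset_eq_empty_iff]

theorem lt_of_mem_arrangements {a : α} {s : Finset α} {L : List α} (hL : L ∈ arrangements s)
    (ha : ∀ x ∈ s, x < a) : ∀ x ∈ L, x < a := fun x hx =>
  ha x ((mem_arrangements.mp hL).2 ▸ List.mem_toFinset.mpr hx)

theorem toFinset_peaks_eq_singleton_iff {s : Finset α} {L : List α} (hL : L ∈ arrangements s)
    {a : α} : L.peaks.toFinset = {a} ↔ L.peaks = [a] :=
  ((List.peaks_sublist L).nodup (mem_arrangements.mp hL).1).toFinset_eq_singleton_iff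

theorem peaks_append_cons_of_mem_arrangements {a : α} {s A : Finset α} {LA LB : List α}
    (ha : ∀ x ∈ s, x < a) (hA : A ⊆ s) (hLA : LA ∈ arrangements A)
    (hLB : LB ∈ arrangements (s \ A)) :
    (LA ++ a :: LB).peaks = LA.peaks ++ (if A ≠ ∅ ∧ A ≠ s then [a] else []) ++ LB.peaks := by
  rw [List.peaks_append_cons_of_forall_lt (lt_of_mem_arrangements hLA fun x hx => ha x (hA hx))
    (lt_of_mem_arrangements hLB fun x hx => ha x (mem_sdiff.mp hx).1)]
  have hB : s \ A = ∅ ↔ A = s := by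
    rw [sdiff_eq_empty_iff_subset, Subset.antisymm_iff, and_iff_right hA]
  simp only [ne_eq, eq_nil_iff_of_mem_arrangements hLA, eq_nil_iff_of_mem_arrangements hLB, hB]

theorem card_filter_peaks_insert_of_forall_lt {a : α} {s : Finset α} (hs : s.Nonempty)
    (ha : ∀ x ∈ s, x < a) {t : List α} (hat : a ∉ t) :
    #{L ∈ arrangements (insert a s) | L.peaks = t} = 2 * #{L ∈ arrangements s | L.peaks = t} := by
  have has : a ∉ s := fun h => (ha a h).false
  rw [card_filter_arrangements_insert has, sum_eq_add ∅ s hs.ne_empty.symm, two_mul]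
  · congr 1
    · rw [arrangements_empty, sdiff_empty, singleton_product, filter_map, card_map]
      refine congrArg card (filter_congr fun L hL => ?_)
      simp [List.peaks_cons_of_forall_lt (lt_of_mem_arrangements hL ha)]
    · rw [sdiff_self, bot_eq_empty, arrangements_empty, product_singleton, filter_map, card_map]
      refine congrArg card (filter_congr fun L hL => ?_)
      simp [List.peaks_append_cons_of_forall_lt (lt_of_mem_arrangements hL ha)]
  · intro A hA hne
    rw [card_eq_zero, filter_eq_empty_iff]
    rintro ⟨LA, LB⟩ hp hpeaks
    rw [mem_product] at hp
    rw [peaks_append_cons_of_mem_arrangements ha (mem_powerset.mp hA) hp.1 hp.2,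
      if_pos hne] at hpeaks
    exact hat (hpeaks ▸ by simp)
  · simp
  · simp

theorem card_filter_peaks_eq_nil {s : Finset α} (hs : s.Nonempty) :
    #{L ∈ arrangements s | L.peaks = []} = 2 ^ (#s - 1) := by
  induction s using Finset.induction_on_max with
  | empty => exact absurd hs not_nonempty_empty
  | insert a s ha ih =>
    rcases s.eq_empty_or_nonempty with rfl | hs'
    · simp [arrangements_singleton, filter_singleton]
    · rw [card_filter_peaks_insert_of_forall_lt hs' ha List.not_mem_nil, ih hs',
        card_insert_of_notMem fun h => (ha a h).false, ← pow_succ']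
      congr 1
      have := hs'.card_pos
      omega

theorem card_filter_peaks_append_cons_eq_singleton {a : α} {s A : Finset α}
    (ha : ∀ x ∈ s, x < a) (hAs : A ⊆ s) (hA : A ≠ ∅ ∧ A ≠ s) :
    #{p ∈ arrangements A ×ˢ arrangements (s \ A) | (p.1 ++ a :: p.2).peaks = [a]} =
      2 ^ (#s - 2) := by
  have hA' : A.Nonempty := nonempty_iff_ne_empty.mpr hA.1
  have hB' : (s \ A).Nonempty := sdiff_nonempty.mpr fun h => hA.2 (Subset.antisymm hAs h)
  rw [filter_congr (q := fun p => p.1.peaks = [] ∧ p.2.peaks = []) fun p hp => ?_,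
    filter_product (fun L : List α => L.peaks = []) (fun L : List α => L.peaks = []),
    card_product, card_filter_peaks_eq_nil hA', card_filter_peaks_eq_nil hB', ← pow_add]
  · have := hA'.card_pos
    have := hB'.card_pos
    have := card_sdiff_add_card_eq_card hAs
    congr 1
    omega
  · rw [mem_product] at hp
    rw [peaks_append_cons_of_mem_arrangements ha hAs hp.1 hp.2, if_pos hA]
    simp [List.append_eq_singleton_iff]

theorem card_filter_peaks_insert_eq_singleton_of_forall_lt {a : α} {s : Finset α}
    (hs : s.Nonempty) (ha : ∀ x ∈ s, x < a) :
    #{L ∈ arrangements (insert a s) | L.peaks = [a]} = (2 ^ #s - 2) * 2 ^ (#s - 2) := by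
  have has : a ∉ s := fun h => (ha a h).false
  have hends : {∅, s} ⊆ s.powerset := by simp [insert_subset_iff]
  rw [card_filter_arrangements_insert has, ← sum_sdiff hends, sum_eq_zero (s := {∅, s}),
    add_zero, sum_const_nat (m := 2 ^ (#s - 2)), card_sdiff_of_subset hends, card_powerset,
    card_pair hs.ne_empty.symm]
  · intro A hA
    simp only [mem_sdiff, mem_powerset, mem_insert, mem_singleton, not_or] at hA
    exact card_filter_peaks_append_cons_eq_singleton ha hA.1 hA.2
  · intro A hA
    rw [card_eq_zero, filter_eq_empty_iff]
    rintro ⟨LA, LB⟩ hp hpeaks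
    rw [mem_product] at hp
    have hAs := mem_powerset.mp (hends hA)
    rw [peaks_append_cons_of_mem_arrangements ha hAs hp.1 hp.2,
      if_neg (by simp only [mem_insert, mem_singleton] at hA; tauto)] at hpeaks
    have hmem : a ∈ LA.peaks ++ [] ++ LB.peaks := hpeaks ▸ List.mem_singleton_self a
    simp only [List.append_nil, List.mem_append] at hmem
    exact hmem.elim
      (List.notMem_peaks_of_forall_lt (lt_of_mem_arrangements hp.1 fun x hx => ha x (hAs hx)))
      (List.notMem_peaks_of_forall_lt
        (lt_of_mem_arrangements hp.2 fun x hx => ha x (mem_sdiff.mp hx).1))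

theorem card_filter_peaks_eq_two_pow_mul {l : α} {t : List α} (ht : ∀ x ∈ t, x ≤ l)
    {s : Finset α} (hs : {x ∈ s | x ≤ l}.Nonempty) :
    #{L ∈ arrangements s | L.peaks = t} =
      2 ^ #{x ∈ s | l < x} * #{L ∈ arrangements {x ∈ s | x ≤ l} | L.peaks = t} := by
  induction s using Finset.induction_on_max with
  | empty => simp at hs
  | insert a s ha ih =>
    by_cases hal : a ≤ l
    · have hle : ∀ x ∈ insert a s, x ≤ l := by
        simpa using ⟨hal, fun x hx => (ha x hx).le.trans hal⟩
      rw [filter_true_of_mem hle, filter_false_of_mem fun x hx => (hle x hx).not_gt, card_empty,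
        pow_zero, one_mul]
    · have has : a ∉ s := fun h => (ha a h).false
      simp only [filter_insert, hal, not_le.mp hal, if_true, if_false] at hs ⊢
      rw [card_insert_of_notMem (by simp [has]),
        card_filter_peaks_insert_of_forall_lt (hs.mono (filter_subset _ _)) ha
          fun h => hal (ht a h), ih hs, pow_succ]
      ring

end Counting

theorem mem_pinSet {n : ℕ} {π : Equiv.Perm (Fin n)} {v : ℕ} :
    v ∈ pinSet n π ↔ ∃ (k : ℕ) (h : k + 2 < n), π ⟨k, by omega⟩ < π ⟨k + 1, by omega⟩ ∧
      π ⟨k + 2, h⟩ < π ⟨k + 1, by omega⟩ ∧ (π ⟨k + 1, by omega⟩ : ℕ) + 1 = v := by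
  simp only [pinSet, mem_image, mem_filter, mem_univ, true_and]
  constructor
  · rintro ⟨⟨_ | k, hk⟩, ⟨h0, hn, hprev, hnext⟩, rfl⟩
    · exact absurd h0 (lt_irrefl 0)
    · exact ⟨k, hn, hprev ⟨k, by omega⟩ rfl, hnext ⟨k + 2, hn⟩ rfl, rfl⟩
  · rintro ⟨k, hk, hprev, hnext, rfl⟩
    refine ⟨⟨k + 1, by omega⟩, ⟨k.succ_pos, hk, fun j hj => ?_, fun j hj => ?_⟩, rfl⟩
    · rwa [show j = ⟨k, by omega⟩ from Fin.ext (by simpa using hj)]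
    · rwa [show j = ⟨k + 2, hk⟩ from Fin.ext hj]

namespace Equiv.Perm

def oneLine {n : ℕ} (π : Equiv.Perm (Fin n)) : List ℕ :=
  List.ofFn fun i => (π i : ℕ) + 1

theorem oneLine_injective (n : ℕ) : Function.Injective (oneLine (n := n)) := fun π σ h =>
  Equiv.ext fun i => Fin.ext (by simpa using congrFun (List.ofFn_injective h) i)

theorem oneLine_mem_arrangements {n : ℕ} (π : Equiv.Perm (Fin n)) :
    π.oneLine ∈ arrangements (Icc 1 n) := by
  refine mem_arrangements.mpr
    ⟨List.nodup_ofFn.mpr fun i j h => π.injective (Fin.ext (by simpa using h)), ?_⟩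
  ext x
  simp only [oneLine, List.mem_toFinset, List.mem_ofFn', Set.mem_range, mem_Icc]
  constructor
  · rintro ⟨i, rfl⟩
    have := (π i).isLt
    omega
  · rintro ⟨h1, h2⟩
    exact ⟨π.symm ⟨x - 1, by omega⟩, by simp; omega⟩

theorem image_oneLine_univ (n : ℕ) :
    (univ : Finset (Equiv.Perm (Fin n))).image oneLine = arrangements (Icc 1 n) := by
  refine eq_of_subset_of_card_le (fun L hL => ?_) ?_
  · obtain ⟨π, -, rfl⟩ := mem_image.mp hL
    exact oneLine_mem_arrangements π
  · rw [card_arrangements, card_image_of_injective _ (oneLine_injective n), card_univ,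
      Fintype.card_perm, Fintype.card_fin, Nat.card_Icc, Nat.add_sub_cancel]

theorem pinSet_eq_toFinset_peaks {n : ℕ} (π : Equiv.Perm (Fin n)) :
    pinSet n π = π.oneLine.peaks.toFinset := by
  ext v
  rw [mem_pinSet, List.mem_toFinset, List.mem_peaks_iff]
  simp [oneLine]

theorem card_pinSet_eq (n : ℕ) (S : Finset ℕ) :
    Nat.card {π : Equiv.Perm (Fin n) // pinSet n π = S} =
      #{L ∈ arrangements (Icc 1 n) | L.peaks.toFinset = S} := by
  rw [Nat.card_eq_fintype_card, Fintype.card_subtype, ← image_oneLine_univ, filter_image,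
    card_image_of_injective _ (oneLine_injective n)]
  simp only [pinSet_eq_toFinset_peaks]

end Equiv.Perm

/-- For `3 ≤ l ≤ n`, the number of permutations of `[n]` with pinnacle set `{l}` is
`2^{n−2}·(2^{l−2} − 1)`. -/
theorem stmt16 (n l : ℕ) (hl : 3 ≤ l) (hln : l ≤ n) :
    Nat.card {π : Equiv.Perm (Fin n) // pinSet n π = {l}} =
      2 ^ (n - 2) * (2 ^ (l - 2) - 1) := by
  have hlow : {x ∈ Icc 1 n | x ≤ l} = insert l (Ico 1 l) := by
    ext x
    simp only [mem_filter, mem_Icc, mem_insert, mem_Ico]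
    omega
  have hhigh : {x ∈ Icc 1 n | l < x} = Ioc l n := by
    ext x
    simp only [mem_filter, mem_Icc, mem_Ioc]
    omega
  rw [Equiv.Perm.card_pinSet_eq, filter_congr fun L hL => toFinset_peaks_eq_singleton_iff hL,
    card_filter_peaks_eq_two_pow_mul (l := l) (by simp) (by rw [hlow]; exact insert_nonempty _ _),
    hlow, hhigh, card_filter_peaks_insert_eq_singleton_of_forall_lt ⟨1, by simp; omega⟩ (by simp),
    Nat.card_Ioc, Nat.card_Ico]
  obtain ⟨k, rfl⟩ := Nat.exists_eq_add_of_le hl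
  obtain ⟨j, rfl⟩ := Nat.exists_eq_add_of_le hln
  rw [show 3 + k + j - (3 + k) = j by omega, show 3 + k - 1 = k + 2 by omega,
    show 3 + k + j - 2 = k + 1 + j by omega, show 3 + k - 2 = k + 1 by omega, Nat.add_sub_cancel]
  have h2 : 2 ≤ 2 ^ (k + 2) := Nat.le_self_pow (by omega) 2
  have h1 : 1 ≤ 2 ^ (k + 1) := Nat.one_le_two_pow
  zify [h1, h2]
  ring
end

section
/- The number of admissible pinnacle sets contained in [n] with exactly d elements and maximum equal to 2d+1 is the Catalan number C_d (for n ≥ 2d+1). -/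
open DyckStep

lemma Finset.get_sort_eq_nth (S : Finset ℕ) {i : ℕ} (h : i < (S.sort (· ≤ ·)).length) :
    (S.sort (· ≤ ·)).get ⟨i, h⟩ = Nat.nth (· ∈ S) i := by
  rw [Nat.nth_eq_getD_sort (p := (· ∈ S)) S.finite_toSet]
  simp [List.getElem?_eq_getElem h]

lemma Nat.count_mem_le_card (S : Finset ℕ) (n : ℕ) : Nat.count (· ∈ S) n ≤ S.card := by
  simpa using Nat.count_le_card (p := (· ∈ S)) S.finite_toSet n

lemma Nat.count_mem_eq_card {S : Finset ℕ} {n : ℕ} (h : ∀ s ∈ S, s < n) :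
    Nat.count (· ∈ S) n = S.card := by
  rw [Nat.count_eq_card_filter_range]
  congr 1
  ext s
  simp only [Finset.mem_filter, Finset.mem_range, and_iff_right_iff_imp]
  exact h s

theorem admissible_iff_two_mul_count_le {S : Finset ℕ} :
    Admissible S ↔ ∀ i, 2 * Nat.count (· ∈ S) (i + 2) ≤ i := by
  constructor
  · intro hA i
    by_contra! hi
    set c := Nat.count (· ∈ S) (i + 2)
    have hk : c - 1 < (S.sort (· ≤ ·)).length := by
      have := Nat.count_mem_le_card S (i + 2)
      rw [Finset.length_sort]; omega
    have hlt : Nat.nth (· ∈ S) (c - 1) < i + 2 := Nat.nth_lt_of_lt_count (by omega)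
    have := hA (c - 1) hk
    rw [Finset.get_sort_eq_nth] at this
    omega
  · intro h i hi
    rw [Finset.get_sort_eq_nth]
    by_contra! hle
    have hcount : Nat.count (· ∈ S) (Nat.nth (· ∈ S) i + 1) = i + 1 :=
      Nat.count_nth_succ fun hf => by simpa using hi
    have := Nat.count_monotone (· ∈ S) (show Nat.nth (· ∈ S) i + 1 ≤ 2 * i + 1 + 2 by omega)
    have := h (2 * i + 1)
    omega

theorem Admissible.two_le {S : Finset ℕ} (hA : Admissible S) {s : ℕ} (hs : s ∈ S) : 2 ≤ s := by
  have h : Nat.count (· ∈ S) 2 = 0 := by simpa using admissible_iff_two_mul_count_le.mp hA 0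
  by_contra! hs2
  exact Nat.count_iff_forall_not.mp h s hs2 hs

theorem Admissible.two_mul_add_one_mem {S : Finset ℕ} {d : ℕ} (hA : Admissible S)
    (hcard : S.card = d) (hd : 0 < d) (hub : ∀ s ∈ S, s ≤ 2 * d + 1) : 2 * d + 1 ∈ S := by
  have hall : Nat.count (· ∈ S) (2 * d + 1 + 1) = d :=
    hcard ▸ Nat.count_mem_eq_card fun s hs => by have := hub s hs; omega
  have hbelow := admissible_iff_two_mul_count_le.mp hA (2 * d - 1)
  rw [show 2 * d - 1 + 2 = 2 * d + 1 by omega] at hbelow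
  exact Nat.count_lt_count_succ_iff (p := (· ∈ S)).mp (by omega)

lemma List.count_U_add_count_D (l : List DyckStep) : l.count U + l.count D = l.length := by
  induction l with
  | nil => rfl
  | cons a l ih => cases a <;> simp <;> omega

def toSteps (S : Finset ℕ) (m : ℕ) : List DyckStep :=
  (List.range m).map fun j ↦ if j + 2 ∈ S then D else U

def ofSteps (l : List DyckStep) : Finset ℕ :=
  {j ∈ Finset.range l.length | l[j]? = some D}.image (· + 2)

section Steps

variable {S : Finset ℕ} {m : ℕ} {l : List DyckStep}

@[simp]
lemma length_toSteps : (toSteps S m).length = m := by simp [toSteps]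

lemma getElem?_toSteps (j : ℕ) :
    (toSteps S m)[j]? = if j < m then some (if j + 2 ∈ S then D else U) else none := by
  by_cases hj : j < m <;> simp [toSteps, hj]

lemma take_toSteps (i : ℕ) : (toSteps S m).take i = toSteps S (min i m) := by
  simp [toSteps, ← List.map_take, List.take_range]

lemma count_D_toSteps (h : ∀ s ∈ S, 2 ≤ s) :
    (toSteps S m).count D = Nat.count (· ∈ S) (m + 2) := by
  induction m with
  | zero =>
    refine (Nat.count_iff_forall_not.mpr fun s hs hsS => ?_).symm
    have := h s hsS
    omega
  | succ m ih =>
    rw [toSteps, List.range_succ, List.map_append, List.count_append, ← toSteps, ih,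
      Nat.count_succ _ (m + 2)]
    split_ifs <;> simp_all

lemma count_D_take_toSteps (h : ∀ s ∈ S, 2 ≤ s ∧ s ≤ m + 1) (i : ℕ) :
    ((toSteps S m).take i).count D = Nat.count (· ∈ S) (i + 2) := by
  rw [take_toSteps, count_D_toSteps fun s hs => (h s hs).1]
  rcases le_total i m with him | hmi
  · rw [min_eq_left him]
  · rw [min_eq_right hmi, Nat.count_mem_eq_card, Nat.count_mem_eq_card] <;>
      intro s hs <;> have := (h s hs).2 <;> omega

lemma add_two_mem_ofSteps (j : ℕ) : j + 2 ∈ ofSteps l ↔ l[j]? = some D := by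
  simp only [ofSteps, Finset.mem_image, Finset.mem_filter, Finset.mem_range, add_left_inj,
    exists_eq_right, and_iff_right_iff_imp]
  intro h
  exact (List.getElem?_eq_some_iff.mp h).1

lemma bounds_of_mem_ofSteps {s : ℕ} (hs : s ∈ ofSteps l) : 2 ≤ s ∧ s ≤ l.length + 1 := by
  simp only [ofSteps, Finset.mem_image, Finset.mem_filter, Finset.mem_range] at hs
  omega

lemma toSteps_ofSteps (l : List DyckStep) : toSteps (ofSteps l) l.length = l := by
  refine List.ext_getElem? fun j => ?_
  simp only [getElem?_toSteps, add_two_mem_ofSteps]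
  split_ifs with hj hD
  · exact hD.symm
  · rw [List.getElem?_eq_getElem hj] at hD ⊢
    cases h : l[j] <;> simp_all
  · exact (List.getElem?_eq_none (by omega)).symm

lemma ofSteps_toSteps (h : ∀ s ∈ S, 2 ≤ s ∧ s ≤ m + 1) : ofSteps (toSteps S m) = S := by
  ext s
  by_cases hs : 2 ≤ s
  · obtain ⟨j, rfl⟩ : ∃ j, s = j + 2 := ⟨s - 2, by omega⟩
    rw [add_two_mem_ofSteps, getElem?_toSteps]
    constructor
    · intro hD
      split_ifs at hD <;> simp_all
    · intro hjS
      have := (h _ hjS).2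
      simp [hjS, show j < m by omega]
  · exact iff_of_false (fun hs' => hs (bounds_of_mem_ofSteps hs').1) fun hs' => hs (h s hs').1

end Steps

theorem admissible_and_card_eq_iff_dyck_toSteps {S : Finset ℕ} {d : ℕ}
    (h : ∀ s ∈ S, 2 ≤ s ∧ s ≤ 2 * d + 1) :
    Admissible S ∧ S.card = d ↔
      (toSteps S (2 * d)).count U = (toSteps S (2 * d)).count D ∧
        ∀ i, ((toSteps S (2 * d)).take i).count D ≤ ((toSteps S (2 * d)).take i).count U := by
  have hD := count_D_take_toSteps h
  have hsum (i : ℕ) := List.count_U_add_count_D ((toSteps S (2 * d)).take i)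
  simp only [List.length_take, length_toSteps] at hsum
  have hcount_top (i : ℕ) (hi : 2 * d ≤ i) : Nat.count (· ∈ S) (i + 2) = S.card :=
    Nat.count_mem_eq_card fun s hs => by have := (h s hs).2; omega
  have htake : (toSteps S (2 * d)).take (2 * d) = toSteps S (2 * d) :=
    List.take_of_length_le (by simp)
  have hD_whole := hD (2 * d)
  have hsum_whole := hsum (2 * d)
  have hcard := hcount_top (2 * d) le_rfl
  rw [htake] at hD_whole hsum_whole
  rw [admissible_iff_two_mul_count_le]
  constructor
  · rintro ⟨hA, hSd⟩
    refine ⟨by omega, fun i => ?_⟩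
    have := hsum i
    have := hcount_top i
    have := hA i
    rw [hD] at *
    omega
  · rintro ⟨hUD, hpre⟩
    refine ⟨fun i => ?_, by omega⟩
    have := hsum i
    have := hpre i
    rw [hD] at *
    omega

lemma toSteps_ofSteps_of_semilength_eq {p : DyckWord} {d : ℕ} (hp : p.semilength = d) :
    toSteps (ofSteps p.toList) (2 * d) = p.toList := by
  rw [← hp, DyckWord.two_mul_semilength_eq_length, toSteps_ofSteps]

def pinnacleSetEquivDyckWord (d : ℕ) :
    {S : Finset ℕ // Admissible S ∧ S.card = d ∧ ∀ s ∈ S, s ≤ 2 * d + 1} ≃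
      {p : DyckWord // p.semilength = d} where
  toFun S :=
    have hS (s) (hs : s ∈ S.1) : 2 ≤ s ∧ s ≤ 2 * d + 1 := ⟨S.2.1.two_le hs, S.2.2.2 s hs⟩
    have hdyck := (admissible_and_card_eq_iff_dyck_toSteps hS).mp ⟨S.2.1, S.2.2.1⟩
    ⟨⟨toSteps S (2 * d), hdyck.1, hdyck.2⟩, by
      have := DyckWord.two_mul_semilength_eq_length (p := ⟨toSteps S (2 * d), hdyck.1, hdyck.2⟩)
      simp only [length_toSteps] at this
      omega⟩
  invFun p :=
    have hlen : p.1.toList.length = 2 * d := by rw [← DyckWord.two_mul_semilength_eq_length, p.2]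
    have hS (s) (hs : s ∈ ofSteps p.1.toList) : 2 ≤ s ∧ s ≤ 2 * d + 1 :=
      hlen ▸ bounds_of_mem_ofSteps hs
    have h := (admissible_and_card_eq_iff_dyck_toSteps hS).mpr <| by
      rw [toSteps_ofSteps_of_semilength_eq p.2]
      exact ⟨p.1.count_U_eq_count_D, p.1.count_D_le_count_U⟩
    ⟨ofSteps p.1.toList, h.1, h.2, fun s hs => (hS s hs).2⟩
  left_inv S := Subtype.ext <| ofSteps_toSteps fun s hs => ⟨S.2.1.two_le hs, S.2.2.2 s hs⟩
  right_inv p := Subtype.ext <| DyckWord.ext <| toSteps_ofSteps_of_semilength_eq p.2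

/-- For `n ≥ 2d+1`, the number of admissible pinnacle sets contained in `[n]` with
exactly `d` elements and maximum `2d+1` is the `d`-th Catalan number. -/
theorem stmt18 (n d : ℕ) (hd : 0 < d) (hn : 2 * d + 1 ≤ n) :
    Nat.card {S : Finset ℕ // S ⊆ Finset.Icc 1 n ∧ Admissible S ∧ S.card = d ∧
        (2 * d + 1) ∈ S ∧ ∀ s ∈ S, s ≤ 2 * d + 1} = catalan d := by
  have hiff (S : Finset ℕ) : (S ⊆ Finset.Icc 1 n ∧ Admissible S ∧ S.card = d ∧
      (2 * d + 1) ∈ S ∧ ∀ s ∈ S, s ≤ 2 * d + 1) ↔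
      (Admissible S ∧ S.card = d ∧ ∀ s ∈ S, s ≤ 2 * d + 1) := by
    refine ⟨fun ⟨_, hA, hcard, _, hub⟩ => ⟨hA, hcard, hub⟩, fun ⟨hA, hcard, hub⟩ => ?_⟩
    refine ⟨fun s hs => ?_, hA, hcard, hA.two_mul_add_one_mem hcard hd hub, hub⟩
    have := hA.two_le hs
    have := hub s hs
    rw [Finset.mem_Icc]
    omega
  rw [Nat.card_congr ((Equiv.subtypeEquivRight hiff).trans (pinnacleSetEquivDyckWord d)),
    Nat.card_eq_fintype_card, DyckWord.card_dyckWord_semilength_eq_catalan]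
end
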